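/- Let ρ : G̃ → G be a surjective group homomorphism with kernel K contained in the center of G̃. If D is a conjugacy class of G̃, then ρ(D) is a conjugacy class of G, and the fiber of the restriction ρ|_D : D → ρ(D) over any point has cardinality equal to the order of the stabilizer K_D = {k ∈ K : kD = D}. -/
import Mathlib


/-- Let `ρ : G̃ → G` be a surjective homomorphism with central kernel `K`.
If `D` is the conjugacy class of `a` in `G̃`, then `ρ(D)` is the conjugacy class of `ρ a`
in `G`, and every fiber of `ρ|_D : D → ρ(D)` has cardinality equal to the order of the
stabilizer `K_D = {k ∈ K : k·D = D}`. -/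
theorem stmt_5 {G' G : Type*} [Group G'] [Group G] (ρ : G' →* G)
    (hsurj : Function.Surjective ρ) (hker : ρ.ker ≤ Subgroup.center G') (a : G') :
    ρ '' {x | IsConj a x} = {y | IsConj (ρ a) y} ∧
    ∀ y ∈ ρ '' {x | IsConj a x},
      Nat.card {x : G' // IsConj a x ∧ ρ x = y} =
      Nat.card {k : ρ.ker //
        (fun x => (k : G') * x) '' {x | IsConj a x} = {x | IsConj a x}} := by
  have hcent : ∀ k ∈ ρ.ker, ∀ g : G', k * g = g * k :=
    fun k hk g => ((Subgroup.mem_center_iff.mp (hker hk)) g).symm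
  have himg : ∀ k : G', (∀ g : G', k * g = g * k) →
      (fun x => k * x) '' {x | IsConj a x} = {z | IsConj (k * a) z} := by
    intro k hk
    ext z
    simp only [Set.mem_image, Set.mem_setOf_eq]
    constructor
    · rintro ⟨w, hw, rfl⟩
      obtain ⟨c, hc⟩ := isConj_iff.mp hw
      refine isConj_iff.mpr ⟨c, ?_⟩
      have hck : c * (k * a) = k * (c * a) := by rw [← mul_assoc, ← hk c, mul_assoc]
      rw [← hc, hck]
      group
    · intro hz
      obtain ⟨c, hc⟩ := isConj_iff.mp hz
      refine ⟨k⁻¹ * z, isConj_iff.mpr ⟨c, ?_⟩, by group⟩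
      have hck : c * (k * a) = k * (c * a) := by rw [← mul_assoc, ← hk c, mul_assoc]
      rw [← hc, hck]
      group
  constructor
  · ext y
    constructor
    · rintro ⟨x, hx, rfl⟩
      exact ρ.map_isConj hx
    · intro hy
      obtain ⟨c, hc⟩ := isConj_iff.mp hy
      obtain ⟨g, rfl⟩ := hsurj c
      exact ⟨g * a * g⁻¹, isConj_iff.mpr ⟨g, rfl⟩, by rw [map_mul, map_mul, map_inv, hc]⟩
  · rintro y ⟨x₀, hx₀, rfl⟩
    have hker' : ∀ x : G', ρ x = ρ x₀ → x * x₀⁻¹ ∈ ρ.ker := by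
      intro x h
      simp [MonoidHom.mem_ker, h]
    have hmem : ∀ k : G',
        ((fun x => k * x) '' {z | IsConj a z} = {z | IsConj a z}) → IsConj a (k * x₀) := by
      intro k hs
      have : k * x₀ ∈ (fun x => k * x) '' {z | IsConj a z} := ⟨x₀, hx₀, rfl⟩
      rwa [hs] at this
    have hstab : ∀ x : G', IsConj a x → ρ x = ρ x₀ →
        (fun z => (x * x₀⁻¹) * z) '' {z | IsConj a z} = {z | IsConj a z} := by
      intro x hx hρ
      have hc := hcent _ (hker' x hρ)
      rw [himg _ hc]
      have h1 : IsConj ((x * x₀⁻¹) * a) x := by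
        have : (x * x₀⁻¹) * x₀ ∈ (fun z => (x * x₀⁻¹) * z) '' {z | IsConj a z} :=
          ⟨x₀, hx₀, rfl⟩
        rw [himg _ hc] at this
        simpa [mul_assoc] using this
      have hka : IsConj ((x * x₀⁻¹) * a) a := h1.trans hx.symm
      ext z
      exact ⟨fun h => hka.symm.trans h, fun h => hka.trans h⟩
    refine Nat.card_congr ?_
    refine
      { toFun := fun p => ⟨⟨p.1 * x₀⁻¹, hker' p.1 p.2.2⟩, hstab p.1 p.2.1 p.2.2⟩
        invFun := fun k => ⟨(k.1 : G') * x₀, hmem _ k.2, by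
          have : (k.1 : G') ∈ ρ.ker := k.1.2
          simp [map_mul, MonoidHom.mem_ker.mp this]⟩
        left_inv := fun p => by
          apply Subtype.ext
          simp [mul_assoc]
        right_inv := fun k => by
          apply Subtype.ext
          apply Subtype.ext
          simp [mul_assoc] }
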